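/- Let Ω ⊂ ℝ^N be a Lipschitz domain, 1 ≤ q ≤ p < ∞ with p > 1, and (u_n) a bounded sequence in X = W₀^{1,p}(Ω;ℝ^M) ∩ W₀^{1,q}(Ω;ℝ^M) satisfying the uniform tail-smallness condition: for every ε > 0 there is j₀ with ‖(φ^{(2)}_n − φ^{(2)}_j)(u_n)‖_X < ε for all n > j ≥ j₀, where φ^{(2)}_n denotes component-wise Lipschitz truncation at level n. Then (φ^{(2)}_n(u_n)) does not concentrate in W^{1,p}(Ω;ℝ^M); if in addition p < N, then (φ^{(2)}_n(u_n)) does not concentrate in L^{p*}(Ω;ℝ^M), p* = pN/(N−p). -/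

import Mathlib

open MeasureTheory Set Filter Metric
open scoped ENNReal NNReal Topology

/-- A Lipschitz domain: an open connected set whose boundary is covered, uniformly, by
countably many balls on which the boundary can be straightened by `L`-bilipschitz maps to a
half-ball, with bounded overlap `K₀` and uniform scale `ρ`. -/
def IsLipschitzDomain {N : ℕ} (hN : 0 < N) (Ω : Set (EuclideanSpace ℝ (Fin N))) : Prop :=
  IsOpen Ω ∧ IsConnected Ω ∧
  ∃ (ρ L : ℝ) (K₀ : ℕ) (Y : Set (EuclideanSpace ℝ (Fin N)))
    (r : EuclideanSpace ℝ (Fin N) → ℝ)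
    (θ θinv : EuclideanSpace ℝ (Fin N) → EuclideanSpace ℝ (Fin N) → EuclideanSpace ℝ (Fin N)),
    0 < ρ ∧ 1 ≤ L ∧ Y.Countable ∧ Y ⊆ frontier Ω ∧
    (∀ y ∈ Y, 0 < r y ∧
      Set.BijOn (θ y) (ball y (2 * r y)) (ball (0 : EuclideanSpace ℝ (Fin N)) (2 * r y)) ∧
      LipschitzOnWith (Real.toNNReal L) (θ y) (ball y (2 * r y)) ∧
      LipschitzOnWith (Real.toNNReal L) (θinv y)
        (ball (0 : EuclideanSpace ℝ (Fin N)) (2 * r y)) ∧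
      (∀ x ∈ ball y (2 * r y), θinv y (θ y x) = x) ∧
      θ y '' (Ω ∩ ball y (2 * r y)) =
        {x ∈ ball (0 : EuclideanSpace ℝ (Fin N)) (2 * r y) | 0 < x ⟨0, hN⟩}) ∧
    (∀ z ∈ frontier Ω, closure Ω ∩ ball z ρ ⊆ ⋃ y ∈ Y, ball y (r y)) ∧
    (∀ x : EuclideanSpace ℝ (Fin N),
      ({y ∈ Y | x ∈ ball y (r y)}).Finite ∧ ({y ∈ Y | x ∈ ball y (r y)}).ncard ≤ K₀)

/-! Fix a level `j₀` beyond which the tail condition makes `w n n - w j₀ n` small in `W^{1,p}`.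
Then `w n n` is the sum of this remainder, whose integral over any set is small, and the
fixed-level truncation `w j₀ n`, which is bounded by `C₀ j₀` on `Ω`, so that its integral over
`E` is at most a constant times `|E|`. In `L^{p*}` the remainder is controlled by the
Gagliardo–Nirenberg–Sobolev inequality for the compactly supported difference. -/

def DoesNotConcentrateOn {α ι : Type*} [MeasurableSpace α] (μ : Measure α) (Ω : Set α)
    (f : ι → α → ℝ) : Prop :=
  ∀ ε > (0:ℝ), ∃ δ > (0:ℝ), ∀ i, ∀ E ⊆ Ω, MeasurableSet E → μ E ≤ ENNReal.ofReal δ →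
    ∫ x in E, f i x ∂μ ≤ ε

theorem norm_rpow_le_two_rpow_mul {F : Type*} [SeminormedAddCommGroup F] (a b : F) {p : ℝ}
    (hp : 1 ≤ p) : ‖a‖ ^ p ≤ 2 ^ (p - 1) * (‖a - b‖ ^ p + ‖b‖ ^ p) := by
  have h := NNReal.rpow_add_le_mul_rpow_add_rpow ‖a - b‖₊ ‖b‖₊ hp
  have hab : ‖a‖ ≤ ‖a - b‖ + ‖b‖ := norm_le_norm_sub_add a b
  calc ‖a‖ ^ p ≤ (‖a - b‖ + ‖b‖) ^ p := by gcongr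
    _ ≤ 2 ^ (p - 1) * (‖a - b‖ ^ p + ‖b‖ ^ p) := by exact_mod_cast h

theorem rpow_add_rpow_le_two_mul_rpow {a b c p : ℝ} (ha : 0 ≤ a) (hb : 0 ≤ b) (hp : 0 ≤ p)
    (habc : a + b ≤ c) : a ^ p + b ^ p ≤ 2 * c ^ p := by
  have hac : a ^ p ≤ c ^ p := by gcongr; linarith
  have hbc : b ^ p ≤ c ^ p := by gcongr; linarith
  linarith

theorem Continuous.integrable_norm_rpow_of_hasCompactSupport {X F : Type*} [TopologicalSpace X]
    [MeasurableSpace X] [OpensMeasurableSpace X] [SeminormedAddCommGroup F] {μ : Measure X}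
    [IsFiniteMeasureOnCompacts μ] {f : X → F} (hf : Continuous f) (h2f : HasCompactSupport f)
    {r : ℝ} (hr : 0 < r) : Integrable (fun x => ‖f x‖ ^ r) μ := by
  refine (hf.norm.rpow_const fun _ => Or.inr hr.le).integrable_of_hasCompactSupport ?_
  exact h2f.comp_left (g := fun y : F => ‖y‖ ^ r) (by simp [Real.zero_rpow hr.ne'])

theorem doesNotConcentrateOn_of_le_add_const {α ι : Type*} [MeasurableSpace α] {μ : Measure α}
    {Ω : Set α} {f : ι → α → ℝ} (hf : ∀ i x, 0 ≤ f i x)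
    (h : ∀ η > (0:ℝ), ∃ K, ∀ i, ∃ g : α → ℝ, IntegrableOn g Ω μ ∧ (∀ x, 0 ≤ g x) ∧
      ∫ x in Ω, g x ∂μ ≤ η ∧ ∀ x ∈ Ω, f i x ≤ g x + K) :
    DoesNotConcentrateOn μ Ω f := by
  intro ε hε
  obtain ⟨K, hK⟩ := h (ε / 2) (by positivity)
  set K' := max K 0
  have hK' : 0 < K' + 1 := by positivity
  refine ⟨ε / (2 * (K' + 1)), by positivity, fun i E hEΩ hE hμE => ?_⟩
  obtain ⟨g, hgΩ, hg0, hgη, hfg⟩ := hK i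
  have hμE' : μ.real E ≤ ε / (2 * (K' + 1)) :=
    ENNReal.toReal_le_of_le_ofReal (by positivity) hμE
  have hEfin : μ E < ∞ := hμE.trans_lt ENNReal.ofReal_lt_top
  calc ∫ x in E, f i x ∂μ ≤ ∫ x in E, (g x + K') ∂μ := by
        refine integral_mono_of_nonneg (ae_of_all _ (hf i))
          ((hgΩ.mono_set hEΩ).add (integrableOn_const hEfin.ne)) ?_
        exact (ae_restrict_of_forall_mem hE) fun x hx =>
          (hfg x (hEΩ hx)).trans (add_le_add_right (le_max_left K 0) _)
    _ = ∫ x in E, g x ∂μ + μ.real E * K' := by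
        rw [integral_add (hgΩ.mono_set hEΩ) (integrableOn_const hEfin.ne), setIntegral_const,
          smul_eq_mul]
    _ ≤ ε / 2 + ε / (2 * (K' + 1)) * (K' + 1) := by
        gcongr
        · exact (setIntegral_mono_set hgΩ (ae_of_all _ hg0) hEΩ.eventuallyLE).trans hgη
        linarith
    _ = ε := by field_simp; ring

theorem doesNotConcentrateOn_diag_of_tail {α : Type*} [MeasurableSpace α] {μ : Measure α}
    {Ω : Set α} {f g : ℕ → ℕ → α → ℝ} {c : ℝ} (hc : 0 < c)
    (hf : ∀ j n x, 0 ≤ f j n x) (hg : ∀ j n x, 0 ≤ g j n x)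
    (hsplit : ∀ j n x, f n n x ≤ c * (g j n x + f j n x))
    (hbdd : ∀ j, ∃ K, ∀ m ≤ j, ∀ n, ∀ x ∈ Ω, f m n x ≤ K)
    (htail : ∀ η > (0:ℝ), ∃ j₀, ∀ n, j₀ < n →
      IntegrableOn (g j₀ n) Ω μ ∧ ∫ x in Ω, g j₀ n x ∂μ ≤ η) :
    DoesNotConcentrateOn μ Ω (fun n => f n n) := by
  refine doesNotConcentrateOn_of_le_add_const (fun n => hf n n) fun η hη => ?_
  obtain ⟨j₀, hj₀⟩ := htail (η / c) (by positivity)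
  obtain ⟨K, hK⟩ := hbdd j₀
  refine ⟨max K (c * K), fun n => ?_⟩
  rcases le_or_gt n j₀ with hn | hn
  · refine ⟨0, integrableOn_zero, fun _ => le_rfl, by simpa using hη.le, fun x hx => ?_⟩
    simpa using (hK n hn n x hx).trans (le_max_left _ _)
  · obtain ⟨hgint, hgη⟩ := hj₀ n hn
    refine ⟨fun x => c * g j₀ n x, hgint.const_mul c, fun x => mul_nonneg hc.le (hg j₀ n x), ?_,
      fun x hx => ?_⟩
    · rw [integral_const_mul]
      calc c * ∫ x in Ω, g j₀ n x ∂μ ≤ c * (η / c) := by gcongr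
        _ = η := by field_simp
    · calc f n n x ≤ c * g j₀ n x + c * K := by
            rw [← mul_add]
            exact (hsplit j₀ n x).trans (by gcongr; exact hK j₀ le_rfl n x hx)
        _ ≤ c * g j₀ n x + max K (c * K) := by gcongr; exact le_max_right _ _

section Sobolev

variable {E : Type*} [NormedAddCommGroup E] [NormedSpace ℝ E] [MeasurableSpace E] [BorelSpace E]
  [FiniteDimensional ℝ E] {μ : Measure E} [μ.IsAddHaarMeasure]
  {F : Type*} [NormedAddCommGroup F] [InnerProductSpace ℝ F]

open Module

theorem integral_norm_rpow_le_of_eq_inner {u : E → F} (hu : ContDiff ℝ 1 u)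
    (h2u : HasCompactSupport u) {p r : ℝ} (hp : 1 ≤ p) (hr : 0 < r) (hn : 0 < finrank ℝ E)
    (hpr : r⁻¹ = p⁻¹ - (finrank ℝ E : ℝ)⁻¹) :
    (∫ x, ‖u x‖ ^ r ∂μ) ^ r⁻¹ ≤
      eLpNormLESNormFDerivOfEqInnerConst μ p * (∫ x, ‖fderiv ℝ u x‖ ^ p ∂μ) ^ p⁻¹ := by
  lift p to ℝ≥0 using by linarith
  lift r to ℝ≥0 using hr.le
  have hu' := hu.continuous.memLp_of_hasCompactSupport (μ := μ) (p := r) h2u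
  have hDu := (hu.continuous_fderiv one_ne_zero).memLp_of_hasCompactSupport (μ := μ) (p := p)
    (h2u.fderiv ℝ)
  have h := eLpNorm_le_eLpNorm_fderiv_of_eq_inner μ hu h2u (by exact_mod_cast hp) hn hpr
  have hp0 : (p : ℝ≥0∞) ≠ 0 := by
    exact_mod_cast (zero_lt_one.trans_le (by exact_mod_cast hp : (1 : ℝ≥0) ≤ p)).ne'
  rw [hu'.eLpNorm_eq_integral_rpow_norm (by simpa using hr.ne') ENNReal.coe_ne_top,
    hDu.eLpNorm_eq_integral_rpow_norm hp0 ENNReal.coe_ne_top,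
    ← ENNReal.ofReal_coe_nnreal (p := eLpNormLESNormFDerivOfEqInnerConst μ p),
    ← ENNReal.ofReal_mul (by positivity)] at h
  simpa using (ENNReal.ofReal_le_ofReal_iff (by positivity)).1 h

theorem exists_integral_norm_rpow_le_of_integral_norm_fderiv_rpow_le {p r : ℝ} (hp : 1 ≤ p)
    (hr : 0 < r) (hn : 0 < finrank ℝ E) (hpr : r⁻¹ = p⁻¹ - (finrank ℝ E : ℝ)⁻¹) :
    ∀ η > (0:ℝ), ∃ θ > (0:ℝ), ∀ u : E → F, ContDiff ℝ 1 u → HasCompactSupport u →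
      ∫ x, ‖fderiv ℝ u x‖ ^ p ∂μ ≤ θ → ∫ x, ‖u x‖ ^ r ∂μ ≤ η := by
  intro η hη
  set c : ℝ := (eLpNormLESNormFDerivOfEqInnerConst μ p : ℝ)
  have hc : 0 ≤ c := NNReal.coe_nonneg _
  have hp0 : 0 < p := by linarith
  refine ⟨(η ^ r⁻¹ / (c + 1)) ^ p, by positivity, fun u hu h2u hDu => ?_⟩
  have hDu' : (∫ x, ‖fderiv ℝ u x‖ ^ p ∂μ) ^ p⁻¹ ≤ η ^ r⁻¹ / (c + 1) :=
    (Real.rpow_inv_le_iff_of_pos (integral_nonneg fun _ => by positivity) (by positivity) hp0).2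
      hDu
  rw [← Real.rpow_le_rpow_iff (integral_nonneg fun _ => by positivity) hη.le (inv_pos.2 hr)]
  calc (∫ x, ‖u x‖ ^ r ∂μ) ^ r⁻¹ ≤ c * (∫ x, ‖fderiv ℝ u x‖ ^ p ∂μ) ^ p⁻¹ :=
        integral_norm_rpow_le_of_eq_inner hu h2u hp hr hn hpr
    _ ≤ c * (η ^ r⁻¹ / (c + 1)) := by gcongr
    _ ≤ η ^ r⁻¹ := by
        rw [mul_div_assoc', div_le_iff₀ (by positivity)]
        nlinarith [Real.rpow_nonneg hη.le r⁻¹]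

end Sobolev

section Truncation

variable {V F : Type*} [NormedAddCommGroup V] [NormedSpace ℝ V] [NormedAddCommGroup F]
  [NormedSpace ℝ F] {Ω : Set V} {w : ℕ → ℕ → V → F} {p C₀ : ℝ}

theorem norm_add_norm_fderiv_le_of_le (hC₀ : 0 ≤ C₀)
    (hbound : ∀ m n, ∀ x ∈ Ω, ‖w m n x‖ + ‖fderiv ℝ (w m n) x‖ ≤ C₀ * m)
    {j m : ℕ} (hmj : m ≤ j) (n : ℕ) {x : V} (hx : x ∈ Ω) :
    ‖w m n x‖ + ‖fderiv ℝ (w m n) x‖ ≤ C₀ * j :=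
  (hbound m n x hx).trans (by gcongr)

variable [MeasurableSpace V] [BorelSpace V] {μ : Measure V} [IsFiniteMeasureOnCompacts μ]

theorem integral_norm_fderiv_rpow_le_setIntegral {u : V → F} (hu : ContDiff ℝ 1 u)
    (h2u : HasCompactSupport u) (hΩ : tsupport u ⊆ Ω) (hp : 0 < p) :
    ∫ x, ‖fderiv ℝ u x‖ ^ p ∂μ ≤ ∫ x in Ω, (‖u x‖ ^ p + ‖fderiv ℝ u x‖ ^ p) ∂μ := by
  have hDu := (hu.continuous_fderiv one_ne_zero).integrable_norm_rpow_of_hasCompactSupport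
    (μ := μ) (h2u.fderiv ℝ) hp
  have hvanish : ∀ x ∉ Ω, ‖fderiv ℝ u x‖ ^ p = 0 := fun x hx => by
    rw [image_eq_zero_of_notMem_tsupport fun h => hx (hΩ (tsupport_fderiv_subset ℝ h)),
      norm_zero, Real.zero_rpow hp.ne']
  rw [← setIntegral_eq_integral_of_forall_compl_eq_zero hvanish]
  have hu' := hu.continuous.integrable_norm_rpow_of_hasCompactSupport (μ := μ) h2u hp
  exact setIntegral_mono hDu.integrableOn (hu'.add hDu).integrableOn
    fun x => le_add_of_nonneg_left (by positivity)

theorem doesNotConcentrateOn_norm_rpow_add_norm_fderiv_rpow_of_tail (hp : 1 ≤ p)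
    (hw : ∀ m n, ContDiff ℝ 1 (w m n) ∧ HasCompactSupport (w m n)) (hC₀ : 0 ≤ C₀)
    (hbound : ∀ m n, ∀ x ∈ Ω, ‖w m n x‖ + ‖fderiv ℝ (w m n) x‖ ≤ C₀ * m)
    (htail : ∀ η > (0:ℝ), ∃ j₀ : ℕ, ∀ n, j₀ < n →
      ∫ x in Ω, (‖w n n x - w j₀ n x‖ ^ p +
        ‖fderiv ℝ (w n n) x - fderiv ℝ (w j₀ n) x‖ ^ p) ∂μ ≤ η) :
    DoesNotConcentrateOn μ Ω (fun n x => ‖w n n x‖ ^ p + ‖fderiv ℝ (w n n) x‖ ^ p) := by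
  have hp0 : 0 < p := by linarith
  refine doesNotConcentrateOn_diag_of_tail
    (f := fun j n x => ‖w j n x‖ ^ p + ‖fderiv ℝ (w j n) x‖ ^ p)
    (g := fun j n x => ‖w n n x - w j n x‖ ^ p + ‖fderiv ℝ (w n n) x - fderiv ℝ (w j n) x‖ ^ p)
    (c := 2 ^ (p - 1)) (by positivity) (fun _ _ _ => by positivity)
    (fun _ _ _ => by positivity) (fun j n x => ?_)
    (fun j => ⟨2 * (C₀ * j) ^ p, fun m hmj n x hx => ?_⟩) fun η hη => ?_
  · have h₀ := norm_rpow_le_two_rpow_mul (w n n x) (w j n x) hp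
    have h₁ := norm_rpow_le_two_rpow_mul (fderiv ℝ (w n n) x) (fderiv ℝ (w j n) x) hp
    linarith
  · exact rpow_add_rpow_le_two_mul_rpow (norm_nonneg _) (norm_nonneg _) hp0.le
      (norm_add_norm_fderiv_le_of_le hC₀ hbound hmj n hx)
  · obtain ⟨j₀, hj₀⟩ := htail η hη
    refine ⟨j₀, fun n hn => ⟨Integrable.integrableOn ?_, hj₀ n hn⟩⟩
    have hwC := fun m => (hw m n).1.continuous
    have hDwC := fun m => (hw m n).1.continuous_fderiv one_ne_zero
    have hwS := fun m => (hw m n).2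
    exact (((hwC n).sub (hwC j₀)).integrable_norm_rpow_of_hasCompactSupport
      ((hwS n).sub (hwS j₀)) hp0).add
      (((hDwC n).sub (hDwC j₀)).integrable_norm_rpow_of_hasCompactSupport
        (((hwS n).fderiv ℝ).sub ((hwS j₀).fderiv ℝ)) hp0)

end Truncation

section SobolevTruncation

variable {E F : Type*} [NormedAddCommGroup E] [NormedSpace ℝ E] [MeasurableSpace E]
  [BorelSpace E] [FiniteDimensional ℝ E] {μ : Measure E} [μ.IsAddHaarMeasure]
  [NormedAddCommGroup F] [InnerProductSpace ℝ F] {Ω : Set E} {w : ℕ → ℕ → E → F} {p r C₀ : ℝ}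

open Module

theorem doesNotConcentrateOn_norm_rpow_of_tail (hp : 1 ≤ p) (hpn : p < finrank ℝ E)
    (hpr : r⁻¹ = p⁻¹ - (finrank ℝ E : ℝ)⁻¹)
    (hw : ∀ m n, ContDiff ℝ 1 (w m n) ∧ HasCompactSupport (w m n) ∧ tsupport (w m n) ⊆ Ω)
    (hC₀ : 0 ≤ C₀) (hbound : ∀ m n, ∀ x ∈ Ω, ‖w m n x‖ + ‖fderiv ℝ (w m n) x‖ ≤ C₀ * m)
    (htail : ∀ η > (0:ℝ), ∃ j₀ : ℕ, ∀ n, j₀ < n →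
      ∫ x in Ω, (‖w n n x - w j₀ n x‖ ^ p +
        ‖fderiv ℝ (w n n) x - fderiv ℝ (w j₀ n) x‖ ^ p) ∂μ ≤ η) :
    DoesNotConcentrateOn μ Ω (fun n x => ‖w n n x‖ ^ r) := by
  have hn : 0 < finrank ℝ E := by exact_mod_cast (zero_lt_one.trans_le hp).trans hpn
  have hr : 0 < r := by
    rw [← inv_pos, hpr, sub_pos]
    exact inv_strictAnti₀ (by linarith) hpn
  have hr1 : 1 ≤ r := by
    rw [← inv_le_one₀ hr, hpr]
    linarith [inv_le_one_of_one_le₀ hp, inv_nonneg.2 (Nat.cast_nonneg (finrank ℝ E) : (0:ℝ) ≤ _)]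
  refine doesNotConcentrateOn_diag_of_tail (f := fun j n x => ‖w j n x‖ ^ r)
    (g := fun j n x => ‖w n n x - w j n x‖ ^ r) (c := 2 ^ (r - 1)) (by positivity)
    (fun _ _ _ => by positivity) (fun _ _ _ => by positivity)
    (fun j n x => norm_rpow_le_two_rpow_mul (w n n x) (w j n x) hr1)
    (fun j => ⟨(C₀ * j) ^ r, fun m hmj n x hx => ?_⟩) fun η hη => ?_
  · have := norm_add_norm_fderiv_le_of_le hC₀ hbound hmj n hx
    exact Real.rpow_le_rpow (norm_nonneg _) (by linarith [norm_nonneg (fderiv ℝ (w m n) x)]) hr.le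
  · obtain ⟨θ, hθ, hsob⟩ := exists_integral_norm_rpow_le_of_integral_norm_fderiv_rpow_le
      (μ := μ) (F := F) hp hr hn hpr η hη
    obtain ⟨j₀, hj₀⟩ := htail θ hθ
    refine ⟨j₀, fun n hn => ?_⟩
    have hd := (hw n n).1.sub (hw j₀ n).1
    have h2d := (hw n n).2.1.sub (hw j₀ n).2.1
    have hdΩ : tsupport (w n n - w j₀ n) ⊆ Ω :=
      (tsupport_sub _ _).trans (union_subset (hw n n).2.2 (hw j₀ n).2.2)
    have hDd : ∀ x, fderiv ℝ (w n n - w j₀ n) x = fderiv ℝ (w n n) x - fderiv ℝ (w j₀ n) x :=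
      fun x => fderiv_sub ((hw n n).1.differentiable one_ne_zero x)
        ((hw j₀ n).1.differentiable one_ne_zero x)
    have hint := hd.continuous.integrable_norm_rpow_of_hasCompactSupport (μ := μ) h2d hr
    refine ⟨hint.integrableOn,
      (setIntegral_le_integral hint (ae_of_all _ fun _ => by positivity)).trans (hsob _ hd h2d ?_)⟩
    calc ∫ x, ‖fderiv ℝ (w n n - w j₀ n) x‖ ^ p ∂μ
        ≤ ∫ x in Ω, (‖(w n n - w j₀ n) x‖ ^ p + ‖fderiv ℝ (w n n - w j₀ n) x‖ ^ p) ∂μ :=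
          integral_norm_fderiv_rpow_le_setIntegral hd h2d hdΩ (by linarith)
      _ ≤ θ := by simpa only [hDd, Pi.sub_apply] using hj₀ n hn

end SobolevTruncation

theorem lipschitz_truncations_do_not_concentrate_general {N M : ℕ}
    (Ω : Set (EuclideanSpace ℝ (Fin N)))
    (p q : ℝ) (hp1 : 1 < p)
    (w : ℕ → ℕ → EuclideanSpace ℝ (Fin N) → EuclideanSpace ℝ (Fin M))
    (hwreg : ∀ m n, ContDiff ℝ 1 (w m n) ∧ HasCompactSupport (w m n) ∧
      tsupport (w m n) ⊆ Ω)
    (C₀ : ℝ) (hC₀ : 1 ≤ C₀)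
    (hwbound : ∀ m n, ∀ x ∈ Ω, ‖w m n x‖ + ‖fderiv ℝ (w m n) x‖ ≤ C₀ * m)
    (htail : ∀ ε > (0:ℝ), ∃ j₀ : ℕ, ∀ j n : ℕ, j₀ ≤ j → j < n →
      (∫ x in Ω, (‖w n n x - w j n x‖ ^ p +
          ‖fderiv ℝ (w n n) x - fderiv ℝ (w j n) x‖ ^ p)) ^ (1/p) +
      (∫ x in Ω, (‖w n n x - w j n x‖ ^ q +
          ‖fderiv ℝ (w n n) x - fderiv ℝ (w j n) x‖ ^ q)) ^ (1/q) < ε) :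
    (∀ ε > (0:ℝ), ∃ δ > (0:ℝ), ∀ n : ℕ, ∀ E : Set (EuclideanSpace ℝ (Fin N)),
      E ⊆ Ω → MeasurableSet E → volume E ≤ ENNReal.ofReal δ →
      ∫ x in E, (‖w n n x‖ ^ p + ‖fderiv ℝ (w n n) x‖ ^ p) ≤ ε) ∧
    (p < N →
      ∀ ε > (0:ℝ), ∃ δ > (0:ℝ), ∀ n : ℕ, ∀ E : Set (EuclideanSpace ℝ (Fin N)),
        E ⊆ Ω → MeasurableSet E → volume E ≤ ENNReal.ofReal δ →
        ∫ x in E, ‖w n n x‖ ^ (p * N / (N - p)) ≤ ε) := by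
  have hp : 1 ≤ p := hp1.le
  have hsmall : ∀ η > (0:ℝ), ∃ j₀ : ℕ, ∀ n, j₀ < n →
      ∫ x in Ω, (‖w n n x - w j₀ n x‖ ^ p +
        ‖fderiv ℝ (w n n) x - fderiv ℝ (w j₀ n) x‖ ^ p) ≤ η := by
    intro η hη
    obtain ⟨j₀, hj₀⟩ := htail (η ^ (1 / p)) (by positivity)
    refine ⟨j₀, fun n hn => ?_⟩
    have hq := Real.rpow_nonneg (integral_nonneg fun x => by positivity :
      0 ≤ ∫ x in Ω, (‖w n n x - w j₀ n x‖ ^ q +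
        ‖fderiv ℝ (w n n) x - fderiv ℝ (w j₀ n) x‖ ^ q)) (1 / q)
    rw [← Real.rpow_le_rpow_iff (integral_nonneg fun x => by positivity) hη.le
      (by positivity : 0 < 1 / p)]
    linarith [hj₀ j₀ n le_rfl hn]
  refine ⟨doesNotConcentrateOn_norm_rpow_add_norm_fderiv_rpow_of_tail hp
    (fun m n => ⟨(hwreg m n).1, (hwreg m n).2.1⟩) (by linarith) hwbound hsmall, fun hpN => ?_⟩
  refine doesNotConcentrateOn_norm_rpow_of_tail hp (by simpa using hpN) ?_ hwreg (by linarith)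
    hwbound hsmall
  have hN : (0:ℝ) < N := by linarith
  rw [finrank_euclideanSpace_fin]
  field_simp

/-- Let `(u_n)` be bounded in `X = W₀^{1,p} ∩ W₀^{1,q}` and let
`w m n = φ^{(2)}_m(u_n)` denote the Lipschitz truncations at level `m` (satisfying the
pointwise bound `|w m n| + |∇(w m n)| ≤ C₀ m` and agreeing with `u_n` off a set of measure
`≲ m^{−p}`). If the uniform tail-smallness condition holds — for every `ε > 0` there is
`j₀` with `‖w n n − w j n‖_X < ε` for all `n > j ≥ j₀` — then `(w n n)_n` does not
concentrate in `W^{1,p}(Ω;ℝ^M)`; if moreover `p < N`, it does not concentrate in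
`L^{p*}(Ω;ℝ^M)` with `p* = pN/(N−p)`. -/
theorem lipschitz_truncations_do_not_concentrate {N M : ℕ} (hN : 0 < N)
    (Ω : Set (EuclideanSpace ℝ (Fin N))) (hΩ : IsLipschitzDomain hN Ω)
    (p q : ℝ) (hq1 : 1 ≤ q) (hqp : q ≤ p) (hp1 : 1 < p)
    (u : ℕ → EuclideanSpace ℝ (Fin N) → EuclideanSpace ℝ (Fin M))
    (hureg : ∀ n, ContDiff ℝ 1 (u n) ∧ HasCompactSupport (u n) ∧ tsupport (u n) ⊆ Ω)
    (B : ℝ)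
    (huB : ∀ n,
      (∫ x in Ω, (‖u n x‖ ^ p + ‖fderiv ℝ (u n) x‖ ^ p)) ^ (1/p) +
      (∫ x in Ω, (‖u n x‖ ^ q + ‖fderiv ℝ (u n) x‖ ^ q)) ^ (1/q) ≤ B)
    (w : ℕ → ℕ → EuclideanSpace ℝ (Fin N) → EuclideanSpace ℝ (Fin M))
    (hwreg : ∀ m n, ContDiff ℝ 1 (w m n) ∧ HasCompactSupport (w m n) ∧
      tsupport (w m n) ⊆ Ω)
    (C₀ : ℝ) (hC₀ : 1 ≤ C₀)
    (hwbound : ∀ m n, ∀ x ∈ Ω, ‖w m n x‖ + ‖fderiv ℝ (w m n) x‖ ≤ C₀ * m)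
    (C₃ : ℝ) (hC₃ : 1 ≤ C₃)
    (hagree : ∀ m n : ℕ, 1 ≤ m →
      volume {x | w m n x ≠ u n x} ≤ ENNReal.ofReal (C₃ ^ p * B ^ p / (m:ℝ) ^ p))
    (htail : ∀ ε > (0:ℝ), ∃ j₀ : ℕ, ∀ j n : ℕ, j₀ ≤ j → j < n →
      (∫ x in Ω, (‖w n n x - w j n x‖ ^ p +
          ‖fderiv ℝ (w n n) x - fderiv ℝ (w j n) x‖ ^ p)) ^ (1/p) +
      (∫ x in Ω, (‖w n n x - w j n x‖ ^ q +
          ‖fderiv ℝ (w n n) x - fderiv ℝ (w j n) x‖ ^ q)) ^ (1/q) < ε) :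
    (∀ ε > (0:ℝ), ∃ δ > (0:ℝ), ∀ n : ℕ, ∀ E : Set (EuclideanSpace ℝ (Fin N)),
      E ⊆ Ω → MeasurableSet E → volume E ≤ ENNReal.ofReal δ →
      ∫ x in E, (‖w n n x‖ ^ p + ‖fderiv ℝ (w n n) x‖ ^ p) ≤ ε) ∧
    (p < N →
      ∀ ε > (0:ℝ), ∃ δ > (0:ℝ), ∀ n : ℕ, ∀ E : Set (EuclideanSpace ℝ (Fin N)),
        E ⊆ Ω → MeasurableSet E → volume E ≤ ENNReal.ofReal δ →
        ∫ x in E, ‖w n n x‖ ^ (p * N / (N - p)) ≤ ε) :=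
  lipschitz_truncations_do_not_concentrate_general Ω p q hp1 w hwreg C₀ hC₀ hwbound htail
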